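/- Let V = ℂ^{2n} with standard basis e_1,…,e_{2n}, equipped with the symplectic form determined by (e_i, e_j) = 0 for i+j ≠ 2n+1, (e_i, e_{2n+1−i}) = 1 for 1 ≤ i ≤ n and (e_i, e_{2n+1−i}) = −1 for n < i ≤ 2n. Set F_i = span(e_1,…,e_i) and G_i = span(e_{2n+1−i},…,e_{2n}). Let P = {p_1 < ⋯ < p_m} and Q = {q_1 < ⋯ < q_m} be index sets with q_j ≤ p_j for all j. Suppose Σ ⊆ V is an m-dimensional isotropic subspace with dim(Σ ∩ F_{p_j}) ≥ j and dim(Σ ∩ G_{2n+1−q_j}) ≥ m+1−j for all 1 ≤ j ≤ m. Then every vector v = ∑_{i=1}^{2n} x_i e_i ∈ Σ satisfies: (a) ∑_{l=c+1}^{d} x_l x_{2n+1−l} = 0 whenever c < d are consecutive elements of I(P,Q) with d − c ≥ 2; (b) x_c = 0 whenever there is no j with q_j ≤ c ≤ p_j; and (c) x_c = 0 whenever there is some j with q_j = p_j = 2n+1−c. -/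

import Mathlib

/-!
If `p_t ≤ a ≤ b < q_{t+1}`, the Schubert conditions give `dim (Σ ∩ F_a) ≥ t` and
`dim (Σ ∩ G_{2n-b}) ≥ m - t`; as `F_a ∩ G_{2n-b} = 0`, this forces
`Σ = (Σ ∩ F_a) ⊕ (Σ ∩ G_{2n-b})`. For a cut `a = b`, split `v = u + w` accordingly: isotropy
gives `⟨u, w⟩ = 0`, and since `u` and `w` live on complementary coordinate ranges this pairing
is the partial sum `∑_{l ≤ min (a, 2n-a)} x_l x_{2n+1-l}`. Subtracting two partial sums gives (a).
Taking `a = c - 1`, `b = c` instead leaves no room for the coordinate `x_c`, which is (b).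
In case (c) the two dimensions add up to `m + 1`, so `Σ` contains `e_{p_j}`, and pairing `v`
with it gives `x_{2n+1-p_j} = 0`.
-/

/-- The sequence `p_0 = 0, p_1, …, p_m` (as a function of `t ∈ ℕ`). -/
def pExt {m : ℕ} (P : Fin m → ℕ) (t : ℕ) : ℕ :=
  if h : 1 ≤ t ∧ t ≤ m then P ⟨t - 1, by omega⟩ else 0

/-- The sequence `q_1, …, q_m, q_{m+1} = 2n+1` (as a function of `t ∈ ℕ`). -/
def qExt (n : ℕ) {m : ℕ} (Q : Fin m → ℕ) (t : ℕ) : ℕ :=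
  if h : 1 ≤ t ∧ t ≤ m then Q ⟨t - 1, by omega⟩ else 2 * n + 1

/-- `c` is a cut through the diagram `D(P,Q)`: `p_t ≤ c < q_{t+1}` for some
`0 ≤ t ≤ m`, with the conventions `p_0 = 0` and `q_{m+1} = 2n+1`. -/
def IsCut (n : ℕ) {m : ℕ} (P Q : Fin m → ℕ) (c : ℕ) : Prop :=
  ∃ t : ℕ, t ≤ m ∧ pExt P t ≤ c ∧ c < qExt n Q (t + 1)

/-- `I(P,Q) = {c ∈ [0,n] : c or 2n−c is a cut through D(P,Q)}`. -/
def ISet (n : ℕ) {m : ℕ} (P Q : Fin m → ℕ) : Set ℕ :=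
  {c : ℕ | c ≤ n ∧ (IsCut n P Q c ∨ IsCut n P Q (2 * n - c))}

open Module Submodule Finset

theorem Submodule.inf_sup_inf_eq_of_finrank_le {K V : Type*} [DivisionRing K] [AddCommGroup V]
    [Module K V] [FiniteDimensional K V] {S A B : Submodule K V} (hAB : Disjoint A B)
    (h : finrank K S ≤ finrank K ↥(S ⊓ A) + finrank K ↥(S ⊓ B)) : S ⊓ A ⊔ S ⊓ B = S := by
  refine eq_of_le_of_finrank_le (sup_le inf_le_left inf_le_left) ?_
  have hdim := finrank_sup_add_finrank_inf_eq (S ⊓ A) (S ⊓ B)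
  rw [(hAB.mono inf_le_right inf_le_right).eq_bot, finrank_bot] at hdim
  omega

theorem Submodule.exists_mem_inf_ne_zero_of_finrank_lt {K V : Type*} [DivisionRing K]
    [AddCommGroup V] [Module K V] [FiniteDimensional K V] {S A B : Submodule K V}
    (h : finrank K S < finrank K ↥(S ⊓ A) + finrank K ↥(S ⊓ B)) :
    ∃ w ∈ S, w ∈ A ∧ w ∈ B ∧ w ≠ 0 := by
  have hdim := finrank_sup_add_finrank_inf_eq (S ⊓ A) (S ⊓ B)
  have hsup := finrank_mono (sup_le inf_le_left inf_le_left : S ⊓ A ⊔ S ⊓ B ≤ S)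
  have hne : S ⊓ A ⊓ (S ⊓ B) ≠ ⊥ := fun hbot => by
    rw [hbot, finrank_bot] at hdim
    omega
  obtain ⟨w, ⟨⟨hwS, hwA⟩, -, hwB⟩, hw⟩ := exists_mem_ne_zero_of_ne_bot hne
  exact ⟨w, hwS, hwA, hwB, hw⟩

theorem Finset.sum_Ioc_zero_eq_sum_fin {M : Type*} [AddCommMonoid M] (f : ℕ → M) {c N : ℕ}
    (hc : c ≤ N) : ∑ l ∈ Ioc 0 c, f l = ∑ i : Fin N with i.val < c, f (i + 1) := by
  symm
  refine sum_bij (fun i _ => i.val + 1) (fun i hi => ?_) (fun i _ j _ hij => ?_)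
    (fun l hl => ?_) (fun _ _ => rfl)
  · simp only [mem_filter, mem_univ, true_and] at hi
    simp only [mem_Ioc]
    omega
  · exact Fin.ext (Nat.add_right_cancel hij)
  · simp only [mem_Ioc] at hl
    exact ⟨⟨l - 1, by omega⟩, by simp only [mem_filter, mem_univ, true_and]; omega,
      by simp only; omega⟩

namespace Module.Basis

variable {R V : Type*} [Semiring R] [AddCommMonoid V] [Module R V]

theorem repr_eq_zero_of_mem_span_image {ι : Type*} (e : Basis ι R V) {s : Set ι} {z : V}
    (hz : z ∈ span R (e '' s)) {i : ι} (hi : i ∉ s) : e.repr z i = 0 :=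
  by_contra fun h => hi (e.mem_span_image.1 hz (Finsupp.mem_support_iff.2 h))

variable {N : ℕ} (e : Basis (Fin N) R V)

def spanFirst (a : ℕ) : Submodule R V := span R (e '' {i | (i : ℕ) < a})

def spanLast (b : ℕ) : Submodule R V := span R (e '' {i | N ≤ (i : ℕ) + b})

variable {e}

theorem repr_eq_zero_of_mem_spanFirst {a : ℕ} {z : V} (hz : z ∈ e.spanFirst a) {i : Fin N}
    (hi : a ≤ i) : e.repr z i = 0 :=
  e.repr_eq_zero_of_mem_span_image hz (not_lt.2 hi)

theorem repr_eq_zero_of_mem_spanLast {b : ℕ} {z : V} (hz : z ∈ e.spanLast b) {i : Fin N}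
    (hi : (i : ℕ) + b < N) : e.repr z i = 0 :=
  e.repr_eq_zero_of_mem_span_image hz (not_le.2 hi)

variable (e)

theorem spanFirst_mono : Monotone e.spanFirst := fun _ _ hab =>
  span_mono (Set.image_mono fun _ hi => lt_of_lt_of_le hi hab)

theorem spanLast_mono : Monotone e.spanLast := fun _ _ hab =>
  span_mono (Set.image_mono fun _ hi => le_trans hi (Nat.add_le_add_left hab _))

theorem disjoint_spanFirst_spanLast {a b : ℕ} (h : a + b ≤ N) :
    Disjoint (e.spanFirst a) (e.spanLast b) :=
  e.linearIndependent.disjoint_span_image <| Set.disjoint_left.2 fun i hia hib => by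
    simp only [Set.mem_ofPred_eq] at hia hib
    omega

end Module.Basis

section SymplecticForm

variable {R V : Type*} [CommRing R] [AddCommGroup V] [Module R V] {n : ℕ}

def IsStandardSymplecticBasis (e : Basis (Fin (2 * n)) R V) (B : V →ₗ[R] V →ₗ[R] R) : Prop :=
  ∀ i j : Fin (2 * n), B (e i) (e j) =
    if (i : ℕ) + 1 + ((j : ℕ) + 1) = 2 * n + 1 then (if (i : ℕ) + 1 ≤ n then 1 else -1) else 0

namespace IsStandardSymplecticBasis

variable {e : Basis (Fin (2 * n)) R V} {B : V →ₗ[R] V →ₗ[R] R}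

theorem apply_basis_left (hB : IsStandardSymplecticBasis e B) (i : Fin (2 * n)) (w : V) :
    B (e i) w = (if (i : ℕ) + 1 ≤ n then 1 else -1) * e.repr w i.rev := by
  have hpair : ∀ j : Fin (2 * n), (i : ℕ) + 1 + ((j : ℕ) + 1) = 2 * n + 1 ↔ i.rev = j := by
    intro j
    rw [Fin.ext_iff, Fin.val_rev]
    omega
  conv_lhs => rw [← e.sum_repr w]
  simp only [map_sum, map_smul, hB i, hpair, smul_eq_mul, mul_ite, mul_zero, sum_ite_eq,
    mem_univ, if_true]
  split_ifs <;> ring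

theorem apply_eq_sum (hB : IsStandardSymplecticBasis e B) (u w : V) :
    B u w = ∑ i : Fin (2 * n),
      (if (i : ℕ) + 1 ≤ n then 1 else -1) * (e.repr u i * e.repr w i.rev) := by
  conv_lhs => rw [← e.sum_repr u]
  simp only [map_sum, map_smul, LinearMap.sum_apply, LinearMap.smul_apply, hB.apply_basis_left,
    smul_eq_mul]
  exact sum_congr rfl fun i _ => by ring

end IsStandardSymplecticBasis

end SymplecticForm

-- The `i`-th term survives only if `i < a ≤ i.rev`, i.e. `i < min a (2n - a)`; there `u` and `w`
-- agree with `u + w` and the sign is `+1`.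
theorem sum_sign_mul_rev_eq_sum_of_split {R : Type*} [CommRing R] {n a : ℕ}
    (u w : Fin (2 * n) → R) (hu : ∀ i : Fin (2 * n), a ≤ i → u i = 0)
    (hw : ∀ i : Fin (2 * n), (i : ℕ) < a → w i = 0) :
    ∑ i : Fin (2 * n), (if (i : ℕ) + 1 ≤ n then 1 else -1) * (u i * w i.rev) =
      ∑ i : Fin (2 * n) with i.val < min a (2 * n - a), (u + w) i * (u + w) i.rev := by
  rw [sum_filter]
  refine sum_congr rfl fun i _ => ?_
  have hrev : (i.rev : ℕ) = 2 * n - (i + 1) := Fin.val_rev i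
  by_cases hi : (i : ℕ) < min a (2 * n - a)
  · rw [if_pos hi, if_pos (by omega), Pi.add_apply, Pi.add_apply, hw i (by omega),
      hu i.rev (by omega)]
    ring
  · have huw : u i * w i.rev = 0 := by
      rcases le_or_gt a i with hai | hia
      · rw [hu i hai, zero_mul]
      · rw [hw i.rev (by omega), mul_zero]
    rw [if_neg hi, huw, mul_zero]

theorem pExt_add_one {m : ℕ} (P : Fin m → ℕ) {t : ℕ} (ht : t < m) :
    pExt P (t + 1) = P ⟨t, ht⟩ := by
  rw [pExt, dif_pos ⟨Nat.le_add_left 1 t, ht⟩]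
  rfl

theorem qExt_add_one (n : ℕ) {m : ℕ} (Q : Fin m → ℕ) {t : ℕ} (ht : t < m) :
    qExt n Q (t + 1) = Q ⟨t, ht⟩ := by
  rw [qExt, dif_pos ⟨Nat.le_add_left 1 t, ht⟩]
  rfl

theorem qExt_add_one_of_le (n : ℕ) {m : ℕ} (Q : Fin m → ℕ) {t : ℕ} (ht : m ≤ t) :
    qExt n Q (t + 1) = 2 * n + 1 := by
  rw [qExt, dif_neg (by omega)]

-- Take `t` maximal with `p_t < c`: then `c ≤ p_{t+1}`, so `c ∉ [q_{t+1}, p_{t+1}]` forces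
-- `c < q_{t+1}`.
theorem exists_pExt_lt_and_lt_qExt {n m : ℕ} {P Q : Fin m → ℕ} {c : ℕ} (hc : 1 ≤ c)
    (hc2n : c ≤ 2 * n) (hcPQ : ∀ j, ¬(Q j ≤ c ∧ c ≤ P j)) :
    ∃ t ≤ m, pExt P t < c ∧ c < qExt n Q (t + 1) := by
  set t := Nat.findGreatest (fun t => pExt P t < c) m
  have hpt : pExt P t < c := Nat.findGreatest_spec (P := fun t => pExt P t < c) (Nat.zero_le m)
    (show pExt P 0 < c by rw [pExt, dif_neg (by omega)]; omega)
  refine ⟨t, Nat.findGreatest_le m, hpt, ?_⟩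
  rcases lt_or_ge t m with htm | htm
  · have hcp : c ≤ P ⟨t, htm⟩ := by
      have := Nat.findGreatest_is_greatest (lt_add_one t) htm
      rwa [pExt_add_one P htm, not_lt] at this
    rw [qExt_add_one n Q htm]
    have := hcPQ ⟨t, htm⟩
    omega
  · rw [qExt_add_one_of_le n Q htm]
    omega

section Schubert

variable {K V : Type*} [Field K] [AddCommGroup V] [Module K V] {n m : ℕ}

/-- `Sig ∈ X_P(F_•) ∩ X_{Q^∨}(G_•)` with `F_a = e.spanFirst a` and `G_b = e.spanLast b`. -/
structure MemSchubertIntersection (e : Basis (Fin (2 * n)) K V) (P Q : Fin m → ℕ)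
    (Sig : Submodule K V) : Prop where
  finrank_eq : finrank K Sig = m
  le_finrank_inf_spanFirst : ∀ j : Fin m, (j : ℕ) + 1 ≤ finrank K ↥(Sig ⊓ e.spanFirst (P j))
  le_finrank_inf_spanLast :
    ∀ j : Fin m, m - (j : ℕ) ≤ finrank K ↥(Sig ⊓ e.spanLast (2 * n + 1 - Q j))

namespace MemSchubertIntersection

variable [FiniteDimensional K V] {e : Basis (Fin (2 * n)) K V} {P Q : Fin m → ℕ}
  {Sig : Submodule K V}

theorem le_finrank_inf_spanFirst_of_pExt_le (hSig : MemSchubertIntersection e P Q Sig)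
    {t a : ℕ} (ht : t ≤ m) (hta : pExt P t ≤ a) : t ≤ finrank K ↥(Sig ⊓ e.spanFirst a) := by
  cases t with
  | zero => exact Nat.zero_le _
  | succ s =>
    rw [pExt_add_one P ht] at hta
    exact (hSig.le_finrank_inf_spanFirst ⟨s, ht⟩).trans
      (finrank_mono (inf_le_inf_left _ (e.spanFirst_mono hta)))

theorem le_finrank_inf_spanLast_of_lt_qExt (hSig : MemSchubertIntersection e P Q Sig)
    {t b : ℕ} (hb : b ≤ 2 * n) (htb : b < qExt n Q (t + 1)) :
    m - t ≤ finrank K ↥(Sig ⊓ e.spanLast (2 * n - b)) := by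
  rcases lt_or_ge t m with ht | ht
  · rw [qExt_add_one n Q ht] at htb
    exact (hSig.le_finrank_inf_spanLast ⟨t, ht⟩).trans
      (finrank_mono (inf_le_inf_left _ (e.spanLast_mono (by omega))))
  · rw [Nat.sub_eq_zero_of_le ht]
    exact Nat.zero_le _

theorem exists_add_of_pExt_le_of_lt_qExt (hSig : MemSchubertIntersection e P Q Sig) {v : V}
    (hv : v ∈ Sig) {t a b : ℕ} (ht : t ≤ m) (hta : pExt P t ≤ a) (hab : a ≤ b)
    (hb : b ≤ 2 * n) (htb : b < qExt n Q (t + 1)) :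
    ∃ u ∈ Sig, ∃ w ∈ Sig, v = u + w ∧ (∀ i : Fin (2 * n), a ≤ i → e.repr u i = 0) ∧
      ∀ i : Fin (2 * n), (i : ℕ) < b → e.repr w i = 0 := by
  have hsplit : Sig ⊓ e.spanFirst a ⊔ Sig ⊓ e.spanLast (2 * n - b) = Sig := by
    refine inf_sup_inf_eq_of_finrank_le (e.disjoint_spanFirst_spanLast (by omega)) ?_
    have hF := hSig.le_finrank_inf_spanFirst_of_pExt_le ht hta
    have hG := hSig.le_finrank_inf_spanLast_of_lt_qExt hb htb
    rw [hSig.finrank_eq]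
    omega
  rw [← hsplit] at hv
  obtain ⟨u, hu, w, hw, rfl⟩ := mem_sup.1 hv
  exact ⟨u, hu.1, w, hw.1, rfl, fun i hi => Basis.repr_eq_zero_of_mem_spanFirst hu.2 hi,
    fun i hi => Basis.repr_eq_zero_of_mem_spanLast hw.2 (by omega)⟩

variable {B : V →ₗ[K] V →ₗ[K] K}

theorem sum_lt_mul_rev_eq_zero_of_isCut (hSig : MemSchubertIntersection e P Q Sig)
    (hB : IsStandardSymplecticBasis e B)
    (hiso : ∀ u ∈ Sig, ∀ w ∈ Sig, B u w = 0) {v : V} (hv : v ∈ Sig) {a : ℕ} (ha : a ≤ 2 * n)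
    (hcut : IsCut n P Q a) :
    ∑ i : Fin (2 * n) with i.val < min a (2 * n - a), e.repr v i * e.repr v i.rev = 0 := by
  obtain ⟨t, ht, hta, hat⟩ := hcut
  obtain ⟨u, hu, w, hw, rfl, hus, hws⟩ :=
    hSig.exists_add_of_pExt_le_of_lt_qExt hv ht hta le_rfl ha hat
  have hsum := sum_sign_mul_rev_eq_sum_of_split _ _ hus hws
  rw [← hB.apply_eq_sum, hiso u hu w hw, ← Finsupp.coe_add, ← map_add] at hsum
  exact hsum.symm

theorem sum_lt_mul_rev_eq_zero_of_mem_ISet (hSig : MemSchubertIntersection e P Q Sig)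
    (hB : IsStandardSymplecticBasis e B)
    (hiso : ∀ u ∈ Sig, ∀ w ∈ Sig, B u w = 0) {v : V} (hv : v ∈ Sig) {c : ℕ}
    (hc : c ∈ ISet n P Q) :
    ∑ i : Fin (2 * n) with i.val < c, e.repr v i * e.repr v i.rev = 0 := by
  obtain ⟨hcn, hcut | hcut⟩ := hc
  · have hsum := hSig.sum_lt_mul_rev_eq_zero_of_isCut hB hiso hv (by omega) hcut
    rwa [min_eq_left (by omega)] at hsum
  · have hsum := hSig.sum_lt_mul_rev_eq_zero_of_isCut hB hiso hv (by omega) hcut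
    rwa [show min (2 * n - c) (2 * n - (2 * n - c)) = c by omega] at hsum

theorem repr_eq_zero_of_forall_not_mem_Icc (hSig : MemSchubertIntersection e P Q Sig) {v : V}
    (hv : v ∈ Sig) {c : ℕ} (hc : 1 ≤ c) (hc2n : c ≤ 2 * n)
    (hcPQ : ∀ j, ¬(Q j ≤ c ∧ c ≤ P j)) : e.repr v ⟨c - 1, by omega⟩ = 0 := by
  obtain ⟨t, ht, htc, hct⟩ := exists_pExt_lt_and_lt_qExt hc hc2n hcPQ
  obtain ⟨u, -, w, -, rfl, hu, hw⟩ :=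
    hSig.exists_add_of_pExt_le_of_lt_qExt (a := c - 1) hv ht (by omega) (Nat.sub_le c 1)
      hc2n hct
  rw [map_add, Finsupp.add_apply, hu _ le_rfl, hw _ (by simp only; omega), add_zero]

theorem repr_eq_zero_of_Q_eq_P (hSig : MemSchubertIntersection e P Q Sig)
    (hB : IsStandardSymplecticBasis e B)
    (hiso : ∀ u ∈ Sig, ∀ w ∈ Sig, B u w = 0) {v : V} (hv : v ∈ Sig) {j : Fin m}
    (hQP : Q j = P j) {c : ℕ} (hc : 1 ≤ c) (hc2n : c ≤ 2 * n) (hPc : P j + c = 2 * n + 1) :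
    e.repr v ⟨c - 1, by omega⟩ = 0 := by
  set k : Fin (2 * n) := ⟨c - 1, by omega⟩
  obtain ⟨w, hwS, hwF, hwG, hw0⟩ :=
    exists_mem_inf_ne_zero_of_finrank_lt (S := Sig) (A := e.spanFirst (P j))
      (B := e.spanLast (2 * n + 1 - P j)) (by
        have hF := hSig.le_finrank_inf_spanFirst j
        have hG := hSig.le_finrank_inf_spanLast j
        rw [hQP] at hG
        rw [hSig.finrank_eq]
        omega)
  have hw : ∀ i, i ≠ k.rev → e.repr w i = 0 := fun i hi => by
    have hrev : (k.rev : ℕ) = P j - 1 := by simp only [k, Fin.val_rev]; omega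
    rcases lt_or_gt_of_ne (Fin.val_ne_of_ne hi) with h | h
    · exact Basis.repr_eq_zero_of_mem_spanLast hwG (by omega)
    · exact Basis.repr_eq_zero_of_mem_spanFirst hwF (by omega)
  have hwk : e.repr w k.rev ≠ 0 := fun h0 => hw0 <| e.ext_elem fun i => by
    rw [map_zero, Finsupp.zero_apply]
    exact if hi : i = k.rev then hi ▸ h0 else hw i hi
  have hvw := hiso v hv w hwS
  rw [hB.apply_eq_sum, sum_eq_single k (fun i _ hik => by
    rw [hw i.rev (by rwa [Ne, Fin.rev_inj]), mul_zero, mul_zero]) (by simp)] at hvw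
  have hsign : (if (k : ℕ) + 1 ≤ n then 1 else -1 : K) ≠ 0 := by
    split_ifs <;> simp
  exact (mul_eq_zero.1 ((mul_eq_zero.1 hvw).resolve_left hsign)).resolve_right hwk

end MemSchubertIntersection

end Schubert

theorem schubert_intersection_equations_general (n m : ℕ) (V : Type) [AddCommGroup V]
    [Module ℂ V] (e : Module.Basis (Fin (2 * n)) ℂ V)
    (B : V →ₗ[ℂ] V →ₗ[ℂ] ℂ)
    (hB : ∀ i j : Fin (2 * n), B (e i) (e j) =
      if (i : ℕ) + 1 + ((j : ℕ) + 1) = 2 * n + 1 then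
        (if (i : ℕ) + 1 ≤ n then 1 else -1) else 0)
    (F G : ℕ → Submodule ℂ V)
    (hF : ∀ i, F i = Submodule.span ℂ (e '' {t : Fin (2 * n) | (t : ℕ) < i}))
    (hG : ∀ i, G i = Submodule.span ℂ (e '' {t : Fin (2 * n) | 2 * n ≤ (t : ℕ) + i}))
    (P Q : Fin m → ℕ)
    (Sig : Submodule ℂ V) (hdim : Module.finrank ℂ Sig = m)
    (hiso : ∀ u ∈ Sig, ∀ w ∈ Sig, B u w = 0)
    (hSchubF : ∀ j : Fin m, (j : ℕ) + 1 ≤ Module.finrank ℂ ↥(Sig ⊓ F (P j)))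
    (hSchubG : ∀ j : Fin m, m - (j : ℕ) ≤ Module.finrank ℂ ↥(Sig ⊓ G (2 * n + 1 - Q j)))
    (v : V) (hv : v ∈ Sig)
    (x : ℕ → ℂ) (hx : ∀ t : ℕ, 1 ≤ t → ∀ h : t - 1 < 2 * n, x t = e.repr v ⟨t - 1, h⟩) :
    (∀ c d : ℕ, c ∈ ISet n P Q → d ∈ ISet n P Q → c < d →
      (∀ t ∈ ISet n P Q, ¬(c < t ∧ t < d)) → 2 ≤ d - c →
      ∑ l ∈ Finset.Icc (c + 1) d, x l * x (2 * n + 1 - l) = 0) ∧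
    (∀ c : ℕ, 1 ≤ c → c ≤ 2 * n → (∀ j : Fin m, ¬(Q j ≤ c ∧ c ≤ P j)) → x c = 0) ∧
    (∀ c : ℕ, 1 ≤ c → c ≤ 2 * n → (∃ j : Fin m, Q j = P j ∧ P j + c = 2 * n + 1) →
      x c = 0) := by
  have : FiniteDimensional ℂ V := Module.Finite.of_basis e
  obtain rfl : F = e.spanFirst := funext hF
  obtain rfl : G = e.spanLast := funext hG
  have hSig : MemSchubertIntersection e P Q Sig := ⟨hdim, hSchubF, hSchubG⟩
  have hpartial : ∀ c ∈ ISet n P Q, ∑ l ∈ Ioc 0 c, x l * x (2 * n + 1 - l) = 0 := by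
    intro c hc
    rw [sum_Ioc_zero_eq_sum_fin (N := 2 * n) _ (by have := hc.1; omega)]
    refine (sum_congr rfl fun i _ => ?_).trans
      (hSig.sum_lt_mul_rev_eq_zero_of_mem_ISet hB hiso hv hc)
    have hrev : 2 * n + 1 - (i + 1) = i.rev + 1 := by rw [Fin.val_rev]; omega
    rw [hrev, hx _ (by omega) (by omega), hx _ (by omega) (by omega)]
    rfl
  refine ⟨fun c d hc hd hcd _ _ => ?_, fun c hc1 hc2n hcPQ => ?_,
    fun c hc1 hc2n ⟨j, hQP, hPc⟩ => ?_⟩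
  · have hsum :=
      sum_Ioc_consecutive (fun l => x l * x (2 * n + 1 - l)) (Nat.zero_le c) hcd.le
    rwa [hpartial c hc, hpartial d hd, zero_add, ← Icc_add_one_left_eq_Ioc] at hsum
  · rw [hx c hc1 (by omega)]
    exact hSig.repr_eq_zero_of_forall_not_mem_Icc hv hc1 hc2n hcPQ
  · rw [hx c hc1 (by omega)]
    exact hSig.repr_eq_zero_of_Q_eq_P hB hiso hv hQP hc1 hc2n hPc

/-- **Points of `Y_{P,Q}` satisfy the equations of `Z_{P,Q}`.**  Let `V = ℂ^{2n}`
with symplectic basis `e_1,…,e_{2n}`, `F_i = span(e_1,…,e_i)`,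
`G_i = span(e_{2n+1−i},…,e_{2n})`, and let `P`, `Q` be index sets with
`q_j ≤ p_j`.  If `Σ` is an `m`-dimensional isotropic subspace with
`dim(Σ ∩ F_{p_j}) ≥ j` and `dim(Σ ∩ G_{2n+1−q_j}) ≥ m+1−j` for all `j`, then
the coordinates `x_1,…,x_{2n}` of any `v ∈ Σ` satisfy:
(a) `∑_{l=c+1}^{d} x_l x_{2n+1−l} = 0` for consecutive `c < d` in `I(P,Q)` with
`d−c ≥ 2`; (b) `x_c = 0` when no `j` has `q_j ≤ c ≤ p_j`; and (c) `x_c = 0`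
when some `j` has `q_j = p_j = 2n+1−c`. -/
theorem schubert_intersection_equations (n m : ℕ) (V : Type) [AddCommGroup V]
    [Module ℂ V] (e : Module.Basis (Fin (2 * n)) ℂ V)
    (B : V →ₗ[ℂ] V →ₗ[ℂ] ℂ)
    (hB : ∀ i j : Fin (2 * n), B (e i) (e j) =
      if (i : ℕ) + 1 + ((j : ℕ) + 1) = 2 * n + 1 then
        (if (i : ℕ) + 1 ≤ n then 1 else -1) else 0)
    (F G : ℕ → Submodule ℂ V)
    (hF : ∀ i, F i = Submodule.span ℂ (e '' {t : Fin (2 * n) | (t : ℕ) < i}))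
    (hG : ∀ i, G i = Submodule.span ℂ (e '' {t : Fin (2 * n) | 2 * n ≤ (t : ℕ) + i}))
    (P Q : Fin m → ℕ)
    (hPmono : StrictMono P) (hPrange : ∀ j, 1 ≤ P j ∧ P j ≤ 2 * n)
    (hPidx : ∀ i j, P i + P j ≠ 2 * n + 1)
    (hQmono : StrictMono Q) (hQrange : ∀ j, 1 ≤ Q j ∧ Q j ≤ 2 * n)
    (hQidx : ∀ i j, Q i + Q j ≠ 2 * n + 1)
    (hQP : ∀ j, Q j ≤ P j)
    (Sig : Submodule ℂ V) (hdim : Module.finrank ℂ Sig = m)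
    (hiso : ∀ u ∈ Sig, ∀ w ∈ Sig, B u w = 0)
    (hSchubF : ∀ j : Fin m, (j : ℕ) + 1 ≤ Module.finrank ℂ ↥(Sig ⊓ F (P j)))
    (hSchubG : ∀ j : Fin m, m - (j : ℕ) ≤ Module.finrank ℂ ↥(Sig ⊓ G (2 * n + 1 - Q j)))
    (v : V) (hv : v ∈ Sig)
    (x : ℕ → ℂ) (hx : ∀ t : ℕ, 1 ≤ t → ∀ h : t - 1 < 2 * n, x t = e.repr v ⟨t - 1, h⟩) :
    (∀ c d : ℕ, c ∈ ISet n P Q → d ∈ ISet n P Q → c < d →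
      (∀ t ∈ ISet n P Q, ¬(c < t ∧ t < d)) → 2 ≤ d - c →
      ∑ l ∈ Finset.Icc (c + 1) d, x l * x (2 * n + 1 - l) = 0) ∧
    (∀ c : ℕ, 1 ≤ c → c ≤ 2 * n → (∀ j : Fin m, ¬(Q j ≤ c ∧ c ≤ P j)) → x c = 0) ∧
    (∀ c : ℕ, 1 ≤ c → c ≤ 2 * n → (∃ j : Fin m, Q j = P j ∧ P j + c = 2 * n + 1) →
      x c = 0) :=
  schubert_intersection_equations_general n m V e B hB F G hF hG P Q Sig hdim hiso hSchubF hSchubG v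
    hv x hx
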